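/- arXiv:1008.1399 — 4 statements merged into one kernel-verified Lean document; each statement's English description precedes it below -/
import Mathlib

section
/- Let C be a separable Frobenius monoid in a monoidal category V, let X be a right C-comodule with coaction δᵣ : X ⟶ X ⊗ C and let Y be a left C-comodule with coaction δₗ : Y ⟶ C ⊗ Y. Consider the parallel pair f₁ := (δᵣ ⊗ 1_Y) : X ⊗ Y ⟶ X ⊗ C ⊗ Y and f₂ := (1_X ⊗ δₗ) : X ⊗ Y ⟶ X ⊗ C ⊗ Y (associators suppressed), and define d := (1_X ⊗ ε ⊗ 1_Y) ∘ (1_X ⊗ μ ⊗ 1_Y) ∘ (1_X ⊗ 1_C ⊗ δₗ) : X ⊗ C ⊗ Y ⟶ X ⊗ Y and a := (1_X ⊗ ε ⊗ 1_Y) ∘ (1_X ⊗ μ ⊗ 1_Y) ∘ (δᵣ ⊗ δₗ) : X ⊗ Y ⟶ X ⊗ Y. Then: (i) d ∘ f₂ = 1_{X⊗Y} and d ∘ f₁ = a; (ii) a is idempotent and f₁ ∘ a = f₂ ∘ a; (iii) for every splitting of a (morphisms p : X ⊗ Y ⟶ W, i : W ⟶ X ⊗ Y with i ∘ p = a and p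 ∘ i = 1_W), the morphism i : W ⟶ X ⊗ Y is an equalizer of the pair (f₁, f₂). Thus the cotensor product X ⊗_C Y is the splitting (X ⊗ Y, a) of the idempotent a. -/
open CategoryTheory MonoidalCategory CategoryTheory.Limits

/-!
Over a Frobenius monoid, a left comodule `(Y, δₗ)` is also a left module, with action
`c ⊗ y ↦ ε(c · y₍₋₁₎) y₍₀₎`; the Frobenius law makes this action a comodule map, and separability
makes `δₗ` a section of it. So `d = X ◁ action` retracts `f₂`, and `a = f₁ ≫ d`. Computing `a`
instead through the symmetric action on `X` shows that `a ≫ f₁` and `a ≫ f₂` are both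
`x ⊗ y ↦ x₍₀₎ ⊗ x₍₁₎ y₍₋₁₎ ⊗ y₍₀₎`. Thus `f₁, f₂, i` with retractions `p, d` form a split
equalizer, and split equalizers are equalizers.
-/

/-- A separable Frobenius monoid in a monoidal category `V`. -/
structure SeparableFrobenius (V : Type*) [Category V] [MonoidalCategory V] where
  C : V
  mul : C ⊗ C ⟶ C
  one : 𝟙_ V ⟶ C
  comul : C ⟶ C ⊗ C
  counit : C ⟶ 𝟙_ V
  mul_assoc : (mul ▷ C) ≫ mul = (α_ C C C).hom ≫ (C ◁ mul) ≫ mul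
  one_mul : (one ▷ C) ≫ mul = (λ_ C).hom
  mul_one : (C ◁ one) ≫ mul = (ρ_ C).hom
  comul_coassoc : comul ≫ (C ◁ comul) = comul ≫ (comul ▷ C) ≫ (α_ C C C).hom
  counit_comul : comul ≫ (counit ▷ C) = (λ_ C).inv
  comul_counit : comul ≫ (C ◁ counit) = (ρ_ C).inv
  frobenius₁ : (comul ▷ C) ≫ (α_ C C C).hom ≫ (C ◁ mul) = mul ≫ comul
  frobenius₂ : (C ◁ comul) ≫ (α_ C C C).inv ≫ (mul ▷ C) = mul ≫ comul
  separable : comul ≫ mul = 𝟙 C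

namespace SeparableFrobenius

variable {V : Type*} [Category V] [MonoidalCategory V] (F : SeparableFrobenius V)

theorem comul_whiskerRight_comp_mul_counit :
    (F.comul ▷ F.C) ≫ (α_ F.C F.C F.C).hom ≫ (F.C ◁ F.mul) ≫ (F.C ◁ F.counit) ≫
      (ρ_ F.C).hom = F.mul := by
  rw [reassoc_of% F.frobenius₁, reassoc_of% F.comul_counit, Iso.inv_hom_id, Category.comp_id]

theorem whiskerLeft_comul_comp_mul_counit :
    (F.C ◁ F.comul) ≫ (α_ F.C F.C F.C).inv ≫ (F.mul ▷ F.C) ≫ (F.counit ▷ F.C) ≫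
      (λ_ F.C).hom = F.mul := by
  rw [reassoc_of% F.frobenius₂, reassoc_of% F.counit_comul, Iso.inv_hom_id, Category.comp_id]

def leftAct {Y : V} (δl : Y ⟶ F.C ⊗ Y) : F.C ⊗ Y ⟶ Y :=
  (F.C ◁ δl) ≫ (α_ F.C F.C Y).inv ≫ (F.mul ▷ Y) ≫ (F.counit ▷ Y) ≫ (λ_ Y).hom

def rightAct {X : V} (δr : X ⟶ X ⊗ F.C) : X ⊗ F.C ⟶ X :=
  (δr ▷ F.C) ≫ (α_ X F.C F.C).hom ≫ (X ◁ F.mul) ≫ (X ◁ F.counit) ≫ (ρ_ X).hom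

def cotensorRetraction (X : V) {Y : V} (δl : Y ⟶ F.C ⊗ Y) : X ⊗ (F.C ⊗ Y) ⟶ X ⊗ Y :=
  (X ◁ (F.C ◁ δl)) ≫ (X ◁ (α_ F.C F.C Y).inv) ≫ (X ◁ (F.mul ▷ Y)) ≫
    (X ◁ (F.counit ▷ Y)) ≫ (X ◁ (λ_ Y).hom)

def cotensorIdempotent {X Y : V} (δr : X ⟶ X ⊗ F.C) (δl : Y ⟶ F.C ⊗ Y) : X ⊗ Y ⟶ X ⊗ Y :=
  (δr ⊗ₘ δl) ≫ (α_ X F.C (F.C ⊗ Y)).hom ≫ (X ◁ (α_ F.C F.C Y).inv) ≫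
    (X ◁ (F.mul ▷ Y)) ≫ (X ◁ (F.counit ▷ Y)) ≫ (X ◁ (λ_ Y).hom)

section LeftComodule

variable {Y : V} {δl : Y ⟶ F.C ⊗ Y}

theorem coaction_comp_leftAct
    (hcoassoc : δl ≫ (F.C ◁ δl) = δl ≫ (F.comul ▷ Y) ≫ (α_ F.C F.C Y).hom)
    (hcounit : δl ≫ (F.counit ▷ Y) = (λ_ Y).inv) :
    δl ≫ F.leftAct δl = 𝟙 Y := by
  rw [leftAct, reassoc_of% hcoassoc, Iso.hom_inv_id_assoc, ← comp_whiskerRight_assoc,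
    F.separable, id_whiskerRight, Category.id_comp, reassoc_of% hcounit, Iso.inv_hom_id]

theorem leftAct_comp_coaction
    (hcoassoc : δl ≫ (F.C ◁ δl) = δl ≫ (F.comul ▷ Y) ≫ (α_ F.C F.C Y).hom) :
    F.leftAct δl ≫ δl = (F.C ◁ δl) ≫ (α_ F.C F.C Y).inv ≫ (F.mul ▷ Y) := by
  have hexchange : F.leftAct δl ≫ δl = (F.C ◁ (δl ≫ (F.C ◁ δl))) ≫ (α_ F.C F.C (F.C ⊗ Y)).inv ≫
      (F.mul ▷ (F.C ⊗ Y)) ≫ (F.counit ▷ (F.C ⊗ Y)) ≫ (λ_ (F.C ⊗ Y)).hom := by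
    simp only [leftAct, Category.assoc, ← leftUnitor_naturality, ← whisker_exchange_assoc]
    monoidal
  rw [hexchange, hcoassoc]
  calc _ = (F.C ◁ δl) ≫ (α_ F.C F.C Y).inv ≫ (((F.C ◁ F.comul) ≫ (α_ F.C F.C F.C).inv ≫
        (F.mul ▷ F.C) ≫ (F.counit ▷ F.C) ≫ (λ_ F.C).hom) ▷ Y) := by monoidal
    _ = _ := by rw [whiskerLeft_comul_comp_mul_counit]

theorem cotensorRetraction_eq_whiskerLeft_leftAct (X : V) :
    F.cotensorRetraction X δl = X ◁ F.leftAct δl := by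
  simp only [cotensorRetraction, leftAct, MonoidalCategory.whiskerLeft_comp]

theorem whiskerLeft_coaction_comp_cotensorRetraction (X : V)
    (hcoassoc : δl ≫ (F.C ◁ δl) = δl ≫ (F.comul ▷ Y) ≫ (α_ F.C F.C Y).hom)
    (hcounit : δl ≫ (F.counit ▷ Y) = (λ_ Y).inv) :
    (X ◁ δl) ≫ F.cotensorRetraction X δl = 𝟙 (X ⊗ Y) := by
  rw [cotensorRetraction_eq_whiskerLeft_leftAct, ← MonoidalCategory.whiskerLeft_comp,
    F.coaction_comp_leftAct hcoassoc hcounit, MonoidalCategory.whiskerLeft_id]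

end LeftComodule

section RightComodule

variable {X : V} {δr : X ⟶ X ⊗ F.C}

theorem rightAct_comp_coaction
    (hcoassoc : δr ≫ (X ◁ F.comul) = δr ≫ (δr ▷ F.C) ≫ (α_ X F.C F.C).hom) :
    F.rightAct δr ≫ δr = (δr ▷ F.C) ≫ (α_ X F.C F.C).hom ≫ (X ◁ F.mul) := by
  have hexchange : F.rightAct δr ≫ δr = ((δr ≫ (δr ▷ F.C)) ▷ F.C) ≫ (α_ (X ⊗ F.C) F.C F.C).hom ≫
      ((X ⊗ F.C) ◁ F.mul) ≫ ((X ⊗ F.C) ◁ F.counit) ≫ (ρ_ (X ⊗ F.C)).hom := by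
    simp only [rightAct, Category.assoc, ← rightUnitor_naturality, whisker_exchange_assoc]
    monoidal
  have hcoassoc' : δr ≫ (δr ▷ F.C) = δr ≫ (X ◁ F.comul) ≫ (α_ X F.C F.C).inv := by
    rw [reassoc_of% hcoassoc, Iso.hom_inv_id, Category.comp_id]
  rw [hexchange, hcoassoc']
  calc _ = (δr ▷ F.C) ≫ (α_ X F.C F.C).hom ≫ (X ◁ ((F.comul ▷ F.C) ≫ (α_ F.C F.C F.C).hom ≫
        (F.C ◁ F.mul) ≫ (F.C ◁ F.counit) ≫ (ρ_ F.C).hom)) := by monoidal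
    _ = _ := by rw [comul_whiskerRight_comp_mul_counit]

end RightComodule

section Cotensor

variable {X Y : V} (δr : X ⟶ X ⊗ F.C) (δl : Y ⟶ F.C ⊗ Y)

theorem cotensorIdempotent_eq_leftAct :
    F.cotensorIdempotent δr δl = (δr ▷ Y) ≫ (α_ X F.C Y).hom ≫ (X ◁ F.leftAct δl) := by
  rw [cotensorIdempotent, leftAct, MonoidalCategory.tensorHom_def]
  monoidal

theorem cotensorIdempotent_eq_rightAct :
    F.cotensorIdempotent δr δl = (X ◁ δl) ≫ (α_ X F.C Y).inv ≫ (F.rightAct δr ▷ Y) := by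
  rw [cotensorIdempotent, rightAct, tensorHom_def']
  monoidal

theorem coaction_whiskerRight_comp_cotensorRetraction :
    ((δr ▷ Y) ≫ (α_ X F.C Y).hom) ≫ F.cotensorRetraction X δl = F.cotensorIdempotent δr δl := by
  rw [cotensorRetraction_eq_whiskerLeft_leftAct, cotensorIdempotent_eq_leftAct, Category.assoc]

theorem cotensorIdempotent_comp_coaction_whiskerRight
    (hcoassoc : δr ≫ (X ◁ F.comul) = δr ≫ (δr ▷ F.C) ≫ (α_ X F.C F.C).hom) :
    F.cotensorIdempotent δr δl ≫ (δr ▷ Y) ≫ (α_ X F.C Y).hom =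
      (δr ⊗ₘ δl) ≫ (α_ X F.C (F.C ⊗ Y)).hom ≫ (X ◁ (α_ F.C F.C Y).inv) ≫ (X ◁ (F.mul ▷ Y)) := by
  rw [cotensorIdempotent_eq_rightAct, Category.assoc, Category.assoc, ← comp_whiskerRight_assoc,
    F.rightAct_comp_coaction hcoassoc, tensorHom_def']
  monoidal

theorem cotensorIdempotent_comp_whiskerLeft_coaction
    (hcoassoc : δl ≫ (F.C ◁ δl) = δl ≫ (F.comul ▷ Y) ≫ (α_ F.C F.C Y).hom) :
    F.cotensorIdempotent δr δl ≫ (X ◁ δl) =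
      (δr ⊗ₘ δl) ≫ (α_ X F.C (F.C ⊗ Y)).hom ≫ (X ◁ (α_ F.C F.C Y).inv) ≫ (X ◁ (F.mul ▷ Y)) := by
  rw [cotensorIdempotent_eq_leftAct, Category.assoc, Category.assoc, ← whiskerLeft_comp,
    F.leftAct_comp_coaction hcoassoc, MonoidalCategory.tensorHom_def]
  monoidal

end Cotensor

end SeparableFrobenius

theorem CategoryTheory.idempotent_of_cosplit {C : Type*} [Category C] {Z T : C}
    {f₁ f₂ : Z ⟶ T} {d : T ⟶ Z} {a : Z ⟶ Z} (hretr : f₂ ≫ d = 𝟙 Z) (hfactor : f₁ ≫ d = a)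
    (hcomm : a ≫ f₁ = a ≫ f₂) : a ≫ a = a :=
  calc a ≫ a = (a ≫ f₁) ≫ d := by rw [Category.assoc, hfactor]
    _ = (a ≫ f₂) ≫ d := by rw [hcomm]
    _ = a := by rw [Category.assoc, hretr, Category.comp_id]

theorem cotensor_as_splitting_of_idempotent_general
    {V : Type*} [Category V] [MonoidalCategory V] (F : SeparableFrobenius V)
    (X : V) (δr : X ⟶ X ⊗ F.C)
    (hXcoassoc : δr ≫ (X ◁ F.comul) = δr ≫ (δr ▷ F.C) ≫ (α_ X F.C F.C).hom)
    (Y : V) (δl : Y ⟶ F.C ⊗ Y)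
    (hYcoassoc : δl ≫ (F.C ◁ δl) = δl ≫ (F.comul ▷ Y) ≫ (α_ F.C F.C Y).hom)
    (hYcounit : δl ≫ (F.counit ▷ Y) = (λ_ Y).inv) :
    letI f₁ : X ⊗ Y ⟶ X ⊗ (F.C ⊗ Y) := (δr ▷ Y) ≫ (α_ X F.C Y).hom
    letI f₂ : X ⊗ Y ⟶ X ⊗ (F.C ⊗ Y) := X ◁ δl
    letI d : X ⊗ (F.C ⊗ Y) ⟶ X ⊗ Y :=
      (X ◁ (F.C ◁ δl)) ≫ (X ◁ (α_ F.C F.C Y).inv) ≫ (X ◁ (F.mul ▷ Y)) ≫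
        (X ◁ (F.counit ▷ Y)) ≫ (X ◁ (λ_ Y).hom)
    letI a : X ⊗ Y ⟶ X ⊗ Y :=
      (δr ⊗ₘ δl) ≫ (α_ X F.C (F.C ⊗ Y)).hom ≫ (X ◁ (α_ F.C F.C Y).inv) ≫
        (X ◁ (F.mul ▷ Y)) ≫ (X ◁ (F.counit ▷ Y)) ≫ (X ◁ (λ_ Y).hom)
    (f₂ ≫ d = 𝟙 (X ⊗ Y)) ∧
    (f₁ ≫ d = a) ∧
    (a ≫ a = a) ∧
    (a ≫ f₁ = a ≫ f₂) ∧
    ∀ (W : V) (p : X ⊗ Y ⟶ W) (i : W ⟶ X ⊗ Y),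
      p ≫ i = a → i ≫ p = 𝟙 W →
      ∀ (w : i ≫ f₁ = i ≫ f₂), Nonempty (IsLimit (Fork.ofι i w)) := by
  have hretr := F.whiskerLeft_coaction_comp_cotensorRetraction X hYcoassoc hYcounit
  have hfactor := F.coaction_whiskerRight_comp_cotensorRetraction δr δl
  have hcomm : F.cotensorIdempotent δr δl ≫ (δr ▷ Y) ≫ (α_ X F.C Y).hom =
      F.cotensorIdempotent δr δl ≫ (X ◁ δl) :=
    (F.cotensorIdempotent_comp_coaction_whiskerRight δr δl hXcoassoc).trans
      (F.cotensorIdempotent_comp_whiskerLeft_coaction δr δl hYcoassoc).symm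
  exact ⟨hretr, hfactor, idempotent_of_cosplit hretr hfactor hcomm, hcomm,
    fun W p i hpi hip w => ⟨(⟨p, F.cotensorRetraction X δl, w, hip, hretr,
      hfactor.trans hpi.symm⟩ : IsSplitEqualizer _ _ i).isEqualizer⟩⟩

/-- For a separable Frobenius monoid `C`, a right `C`-comodule
`(X, δᵣ)` and a left `C`-comodule `(Y, δₗ)`, the parallel pair
`f₁ = δᵣ ⊗ 1`, `f₂ = 1 ⊗ δₗ : X ⊗ Y ⟶ X ⊗ (C ⊗ Y)` is cosplit by
`d = (1 ⊗ ε ⊗ 1)(1 ⊗ μ ⊗ 1)(1 ⊗ 1 ⊗ δₗ)`; the induced idempotent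
`a = (1 ⊗ ε ⊗ 1)(1 ⊗ μ ⊗ 1)(δᵣ ⊗ δₗ)` satisfies `d ∘ f₂ = 1`, `d ∘ f₁ = a`,
`f₁ ∘ a = f₂ ∘ a`, and any splitting of `a` is an equalizer of `(f₁, f₂)`,
i.e. computes the cotensor product `X ⊗_C Y`. -/
theorem cotensor_as_splitting_of_idempotent
    {V : Type*} [Category V] [MonoidalCategory V] (F : SeparableFrobenius V)
    (X : V) (δr : X ⟶ X ⊗ F.C)
    (hXcoassoc : δr ≫ (X ◁ F.comul) = δr ≫ (δr ▷ F.C) ≫ (α_ X F.C F.C).hom)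
    (hXcounit : δr ≫ (X ◁ F.counit) = (ρ_ X).inv)
    (Y : V) (δl : Y ⟶ F.C ⊗ Y)
    (hYcoassoc : δl ≫ (F.C ◁ δl) = δl ≫ (F.comul ▷ Y) ≫ (α_ F.C F.C Y).hom)
    (hYcounit : δl ≫ (F.counit ▷ Y) = (λ_ Y).inv) :
    letI f₁ : X ⊗ Y ⟶ X ⊗ (F.C ⊗ Y) := (δr ▷ Y) ≫ (α_ X F.C Y).hom
    letI f₂ : X ⊗ Y ⟶ X ⊗ (F.C ⊗ Y) := X ◁ δl
    letI d : X ⊗ (F.C ⊗ Y) ⟶ X ⊗ Y :=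
      (X ◁ (F.C ◁ δl)) ≫ (X ◁ (α_ F.C F.C Y).inv) ≫ (X ◁ (F.mul ▷ Y)) ≫
        (X ◁ (F.counit ▷ Y)) ≫ (X ◁ (λ_ Y).hom)
    letI a : X ⊗ Y ⟶ X ⊗ Y :=
      (δr ⊗ₘ δl) ≫ (α_ X F.C (F.C ⊗ Y)).hom ≫ (X ◁ (α_ F.C F.C Y).inv) ≫
        (X ◁ (F.mul ▷ Y)) ≫ (X ◁ (F.counit ▷ Y)) ≫ (X ◁ (λ_ Y).hom)
    (f₂ ≫ d = 𝟙 (X ⊗ Y)) ∧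
    (f₁ ≫ d = a) ∧
    (a ≫ a = a) ∧
    (a ≫ f₁ = a ≫ f₂) ∧
    ∀ (W : V) (p : X ⊗ Y ⟶ W) (i : W ⟶ X ⊗ Y),
      p ≫ i = a → i ≫ p = 𝟙 W →
      ∀ (w : i ≫ f₁ = i ≫ f₂), Nonempty (IsLimit (Fork.ofι i w)) :=
  cotensor_as_splitting_of_idempotent_general F X δr hXcoassoc Y δl hYcoassoc hYcounit
end

section
/- Let C be a separable Frobenius monoid in a monoidal category V, let X be a right C-module with action ρ : X ⊗ C ⟶ X and let Y be a left C-module with action λ : C ⊗ Y ⟶ Y. Consider the parallel pair g₁ := (ρ ⊗ 1_Y) : X ⊗ C ⊗ Y ⟶ X ⊗ Y and g₂ := (1_X ⊗ λ) : X ⊗ C ⊗ Y ⟶ X ⊗ Y (associators suppressed), and define b := (ρ ⊗ λ) ∘ (1_X ⊗ (δ ∘ η) ⊗ 1_Y) : X ⊗ Y ⟶ X ⊗ Y (unitors and associators suppressed). Then: (i) b is idempotent and b ∘ g₁ = b ∘ g₂; (ii) for every splitting of b (morphisms p : X ⊗ Y ⟶ W, i : W ⟶ X ⊗ Y with i ∘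 p = b and p ∘ i = 1_W), the morphism p : X ⊗ Y ⟶ W is a coequalizer of the pair (g₁, g₂). Thus the tensor product X ⊗_C Y over C is the splitting (X ⊗ Y, b) of the idempotent b. -/
/-!
Write `δη = c₁ ⊗ c₂`. The map `e : X ⊗ Y ⟶ (X ⊗ C) ⊗ Y`, `x ⊗ y ↦ (x ⊗ c₁) ⊗ c₂ y`, satisfies
`e ≫ g₁ = b` by construction and `e ≫ g₂ = 1` because `c₁ c₂ = μ δ η = η` (separability).
By the Frobenius law `c c₁ ⊗ c₂ = δ c = c₁ ⊗ c₂ c`, so `g₁ ≫ b` and `g₂ ≫ b` both send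
`x ⊗ c ⊗ y` to `x (δ c)₁ ⊗ (δ c)₂ y`. Hence `b = e ≫ g₁` is idempotent, and any splitting
`(p, i)` of `b` together with `e` exhibits `p` as a split coequalizer of `g₁, g₂`.
-/

open CategoryTheory MonoidalCategory CategoryTheory.Limits

namespace SeparableFrobenius

variable {V : Type*} [Category V] [MonoidalCategory V] (F : SeparableFrobenius V)

lemma whiskerLeft_one_comul_mul :
    (ρ_ F.C).inv ≫ (F.C ◁ (F.one ≫ F.comul)) ≫ (α_ F.C F.C F.C).inv ≫ (F.mul ▷ F.C) =
      F.comul := by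
  rw [whiskerLeft_comp]
  slice_lhs 3 5 => rw [F.frobenius₂]
  slice_lhs 2 3 => rw [F.mul_one]
  simp

lemma whiskerRight_one_comul_mul :
    (λ_ F.C).inv ≫ ((F.one ≫ F.comul) ▷ F.C) ≫ (α_ F.C F.C F.C).hom ≫ (F.C ◁ F.mul) =
      F.comul := by
  rw [comp_whiskerRight]
  slice_lhs 3 5 => rw [F.frobenius₁]
  slice_lhs 2 3 => rw [F.one_mul]
  simp

section Modules

variable {X Y : V} {ract : X ⊗ F.C ⟶ X} {lact : F.C ⊗ Y ⟶ Y}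

variable (ract lact) in
def balancingIdempotent : X ⊗ Y ⟶ X ⊗ Y :=
  (X ◁ (λ_ Y).inv) ≫ (X ◁ ((F.one ≫ F.comul) ▷ Y)) ≫ (X ◁ (α_ F.C F.C Y).hom) ≫
    (α_ X F.C (F.C ⊗ Y)).inv ≫ (ract ⊗ₘ lact)

variable (ract lact) in
def comulAct : (X ⊗ F.C) ⊗ Y ⟶ X ⊗ Y :=
  ((X ◁ F.comul) ▷ Y) ≫ ((α_ X F.C F.C).inv ▷ Y) ≫ (α_ (X ⊗ F.C) F.C Y).hom ≫ (ract ⊗ₘ lact)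

lemma whiskerRight_comp_balancingIdempotent
    (hXassoc : (α_ X F.C F.C).inv ≫ (ract ▷ F.C) ≫ ract = (X ◁ F.mul) ≫ ract) :
    (ract ▷ Y) ≫ F.balancingIdempotent ract lact = F.comulAct ract lact := by
  calc (ract ▷ Y) ≫ F.balancingIdempotent ract lact
      = ((X ⊗ F.C) ◁ ((λ_ Y).inv ≫ ((F.one ≫ F.comul) ▷ Y) ≫ (α_ F.C F.C Y).hom)) ≫
          (α_ (X ⊗ F.C) F.C (F.C ⊗ Y)).inv ≫ ((ract ▷ F.C) ▷ (F.C ⊗ Y)) ≫ (ract ⊗ₘ lact) := by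
        simp only [balancingIdempotent, whiskerLeft_comp, Category.assoc, ← whisker_exchange_assoc,
          associator_inv_naturality_left_assoc]
    _ = ((X ⊗ F.C) ◁ ((λ_ Y).inv ≫ ((F.one ≫ F.comul) ▷ Y) ≫ (α_ F.C F.C Y).hom)) ≫
          (α_ (X ⊗ F.C) F.C (F.C ⊗ Y)).inv ≫ (((α_ X F.C F.C).hom ≫ (X ◁ F.mul)) ▷ (F.C ⊗ Y)) ≫
            (ract ⊗ₘ lact) := by
        simp only [whiskerRight_comp_tensorHom, ← hXassoc, Category.assoc, Iso.hom_inv_id_assoc]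
    _ = ((X ◁ ((ρ_ F.C).inv ≫ (F.C ◁ (F.one ≫ F.comul)) ≫ (α_ F.C F.C F.C).inv ≫
          (F.mul ▷ F.C))) ▷ Y) ≫ ((α_ X F.C F.C).inv ▷ Y) ≫ (α_ (X ⊗ F.C) F.C Y).hom ≫
            (ract ⊗ₘ lact) := by
        simp only [← Category.assoc]; congr 1; monoidal
    _ = F.comulAct ract lact := by
        rw [whiskerLeft_one_comul_mul, comulAct]

lemma whiskerLeft_comp_balancingIdempotent
    (hYassoc : (α_ F.C F.C Y).hom ≫ (F.C ◁ lact) ≫ lact = (F.mul ▷ Y) ≫ lact) :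
    ((α_ X F.C Y).hom ≫ (X ◁ lact)) ≫ F.balancingIdempotent ract lact = F.comulAct ract lact := by
  calc ((α_ X F.C Y).hom ≫ (X ◁ lact)) ≫ F.balancingIdempotent ract lact
      = (α_ X F.C Y).hom ≫ (X ◁ ((λ_ (F.C ⊗ Y)).inv ≫ ((F.one ≫ F.comul) ▷ (F.C ⊗ Y)) ≫
          (α_ F.C F.C (F.C ⊗ Y)).hom)) ≫ (α_ X F.C (F.C ⊗ (F.C ⊗ Y))).inv ≫
            ((X ⊗ F.C) ◁ (F.C ◁ lact)) ≫ (ract ⊗ₘ lact) := by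
        simp only [balancingIdempotent, ← whiskerLeft_comp_assoc, Category.assoc,
          leftUnitor_inv_naturality_assoc, whisker_exchange_assoc,
          associator_naturality_right]
        simp only [whiskerLeft_comp, Category.assoc, associator_inv_naturality_right_assoc]
    _ = (α_ X F.C Y).hom ≫ (X ◁ ((λ_ (F.C ⊗ Y)).inv ≫ ((F.one ≫ F.comul) ▷ (F.C ⊗ Y)) ≫
          (α_ F.C F.C (F.C ⊗ Y)).hom)) ≫ (α_ X F.C (F.C ⊗ (F.C ⊗ Y))).inv ≫
            ((X ⊗ F.C) ◁ ((α_ F.C F.C Y).inv ≫ (F.mul ▷ Y))) ≫ (ract ⊗ₘ lact) := by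
        simp only [whiskerLeft_comp_tensorHom, ← hYassoc, Category.assoc, Iso.inv_hom_id_assoc]
    _ = ((X ◁ ((λ_ F.C).inv ≫ ((F.one ≫ F.comul) ▷ F.C) ≫ (α_ F.C F.C F.C).hom ≫
          (F.C ◁ F.mul))) ▷ Y) ≫ ((α_ X F.C F.C).inv ▷ Y) ≫ (α_ (X ⊗ F.C) F.C Y).hom ≫
            (ract ⊗ₘ lact) := by
        simp only [← Category.assoc]; congr 1; monoidal
    _ = F.comulAct ract lact := by
        rw [whiskerRight_one_comul_mul, comulAct]

lemma whiskerRight_one_comul_act_act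
    (hYassoc : (α_ F.C F.C Y).hom ≫ (F.C ◁ lact) ≫ lact = (F.mul ▷ Y) ≫ lact)
    (hYunit : (λ_ Y).inv ≫ (F.one ▷ Y) ≫ lact = 𝟙 Y) :
    (λ_ Y).inv ≫ ((F.one ≫ F.comul) ▷ Y) ≫ (α_ F.C F.C Y).hom ≫ (F.C ◁ lact) ≫ lact = 𝟙 Y := by
  rw [hYassoc, ← comp_whiskerRight_assoc, Category.assoc, F.separable, Category.comp_id, hYunit]

variable (X lact) in
def balancingSection : X ⊗ Y ⟶ (X ⊗ F.C) ⊗ Y :=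
  (X ◁ ((λ_ Y).inv ≫ ((F.one ≫ F.comul) ▷ Y) ≫ (α_ F.C F.C Y).hom ≫ (F.C ◁ lact))) ≫
    (α_ X F.C Y).inv

variable (ract lact) in
lemma balancingSection_comp_whiskerRight :
    F.balancingSection X lact ≫ (ract ▷ Y) = F.balancingIdempotent ract lact := by
  simp [balancingSection, balancingIdempotent, tensorHom_def']

lemma balancingSection_comp_whiskerLeft
    (hYassoc : (α_ F.C F.C Y).hom ≫ (F.C ◁ lact) ≫ lact = (F.mul ▷ Y) ≫ lact)
    (hYunit : (λ_ Y).inv ≫ (F.one ▷ Y) ≫ lact = 𝟙 Y) :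
    F.balancingSection X lact ≫ (α_ X F.C Y).hom ≫ (X ◁ lact) = 𝟙 (X ⊗ Y) := by
  simp only [balancingSection, Category.assoc, Iso.inv_hom_id_assoc, ← whiskerLeft_comp,
    F.whiskerRight_one_comul_act_act hYassoc hYunit, whiskerLeft_id]

lemma balancingIdempotent_coequalizes
    (hXassoc : (α_ X F.C F.C).inv ≫ (ract ▷ F.C) ≫ ract = (X ◁ F.mul) ≫ ract)
    (hYassoc : (α_ F.C F.C Y).hom ≫ (F.C ◁ lact) ≫ lact = (F.mul ▷ Y) ≫ lact) :
    (ract ▷ Y) ≫ F.balancingIdempotent ract lact =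
      ((α_ X F.C Y).hom ≫ (X ◁ lact)) ≫ F.balancingIdempotent ract lact := by
  rw [F.whiskerRight_comp_balancingIdempotent hXassoc,
    F.whiskerLeft_comp_balancingIdempotent hYassoc]

lemma balancingIdempotent_idem
    (hXassoc : (α_ X F.C F.C).inv ≫ (ract ▷ F.C) ≫ ract = (X ◁ F.mul) ≫ ract)
    (hYassoc : (α_ F.C F.C Y).hom ≫ (F.C ◁ lact) ≫ lact = (F.mul ▷ Y) ≫ lact)
    (hYunit : (λ_ Y).inv ≫ (F.one ▷ Y) ≫ lact = 𝟙 Y) :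
    F.balancingIdempotent ract lact ≫ F.balancingIdempotent ract lact =
      F.balancingIdempotent ract lact := by
  calc F.balancingIdempotent ract lact ≫ F.balancingIdempotent ract lact
      = F.balancingSection X lact ≫ (ract ▷ Y) ≫ F.balancingIdempotent ract lact := by
        rw [← Category.assoc, F.balancingSection_comp_whiskerRight]
    _ = (F.balancingSection X lact ≫ (α_ X F.C Y).hom ≫ (X ◁ lact)) ≫
          F.balancingIdempotent ract lact := by
        rw [F.balancingIdempotent_coequalizes hXassoc hYassoc]; simp only [Category.assoc]
    _ = F.balancingIdempotent ract lact := by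
        rw [F.balancingSection_comp_whiskerLeft hYassoc hYunit, Category.id_comp]

def isSplitCoequalizerOfSplitting
    (hXassoc : (α_ X F.C F.C).inv ≫ (ract ▷ F.C) ≫ ract = (X ◁ F.mul) ≫ ract)
    (hYassoc : (α_ F.C F.C Y).hom ≫ (F.C ◁ lact) ≫ lact = (F.mul ▷ Y) ≫ lact)
    (hYunit : (λ_ Y).inv ≫ (F.one ▷ Y) ≫ lact = 𝟙 Y)
    {W : V} (p : X ⊗ Y ⟶ W) (i : W ⟶ X ⊗ Y)
    (hpi : p ≫ i = F.balancingIdempotent ract lact) (hip : i ≫ p = 𝟙 W) :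
    IsSplitCoequalizer (ract ▷ Y) ((α_ X F.C Y).hom ≫ (X ◁ lact)) p where
  rightSection := i
  leftSection := F.balancingSection X lact
  condition := by
    have hp : p = F.balancingIdempotent ract lact ≫ p := by
      rw [← hpi, Category.assoc, hip, Category.comp_id]
    rw [hp, ← Category.assoc, ← Category.assoc, F.balancingIdempotent_coequalizes hXassoc hYassoc]
  rightSection_π := hip
  leftSection_bottom := F.balancingSection_comp_whiskerLeft hYassoc hYunit
  leftSection_top := (F.balancingSection_comp_whiskerRight ract lact).trans hpi.symm

end Modules

end SeparableFrobenius

theorem tensor_over_C_as_splitting_of_idempotent_general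
    {V : Type*} [Category V] [MonoidalCategory V] (F : SeparableFrobenius V)
    (X : V) (ract : X ⊗ F.C ⟶ X)
    (hXassoc : (α_ X F.C F.C).inv ≫ (ract ▷ F.C) ≫ ract = (X ◁ F.mul) ≫ ract)
    (Y : V) (lact : F.C ⊗ Y ⟶ Y)
    (hYassoc : (α_ F.C F.C Y).hom ≫ (F.C ◁ lact) ≫ lact = (F.mul ▷ Y) ≫ lact)
    (hYunit : (λ_ Y).inv ≫ (F.one ▷ Y) ≫ lact = 𝟙 Y) :
    letI g₁ : (X ⊗ F.C) ⊗ Y ⟶ X ⊗ Y := ract ▷ Y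
    letI g₂ : (X ⊗ F.C) ⊗ Y ⟶ X ⊗ Y := (α_ X F.C Y).hom ≫ (X ◁ lact)
    letI b : X ⊗ Y ⟶ X ⊗ Y :=
      (X ◁ (λ_ Y).inv) ≫ (X ◁ ((F.one ≫ F.comul) ▷ Y)) ≫ (X ◁ (α_ F.C F.C Y).hom) ≫
        (α_ X F.C (F.C ⊗ Y)).inv ≫ (ract ⊗ₘ lact)
    (b ≫ b = b) ∧
    (g₁ ≫ b = g₂ ≫ b) ∧
    ∀ (W : V) (p : X ⊗ Y ⟶ W) (i : W ⟶ X ⊗ Y),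
      p ≫ i = b → i ≫ p = 𝟙 W →
      ∀ (w : g₁ ≫ p = g₂ ≫ p), Nonempty (IsColimit (Cofork.ofπ p w)) := by
  exact ⟨F.balancingIdempotent_idem hXassoc hYassoc hYunit,
    F.balancingIdempotent_coequalizes hXassoc hYassoc, fun _ p i hpi hip _ =>
      ⟨(F.isSplitCoequalizerOfSplitting hXassoc hYassoc hYunit p i hpi hip).isCoequalizer⟩⟩

/-- For a separable Frobenius monoid `C`, a right `C`-module `(X, ρ)`
and a left `C`-module `(Y, l)`, the morphism
`b = (ρ ⊗ l) ∘ (1 ⊗ (δ ∘ η) ⊗ 1) : X ⊗ Y ⟶ X ⊗ Y` is an idempotent with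
`b ∘ g₁ = b ∘ g₂` for the parallel pair `g₁ = ρ ⊗ 1`, `g₂ = 1 ⊗ l`, and any
splitting of `b` gives a coequalizer of `(g₁, g₂)`, i.e. computes `X ⊗_C Y`. -/
theorem tensor_over_C_as_splitting_of_idempotent
    {V : Type*} [Category V] [MonoidalCategory V] (F : SeparableFrobenius V)
    (X : V) (ract : X ⊗ F.C ⟶ X)
    (hXassoc : (α_ X F.C F.C).inv ≫ (ract ▷ F.C) ≫ ract = (X ◁ F.mul) ≫ ract)
    (hXunit : (ρ_ X).inv ≫ (X ◁ F.one) ≫ ract = 𝟙 X)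
    (Y : V) (lact : F.C ⊗ Y ⟶ Y)
    (hYassoc : (α_ F.C F.C Y).hom ≫ (F.C ◁ lact) ≫ lact = (F.mul ▷ Y) ≫ lact)
    (hYunit : (λ_ Y).inv ≫ (F.one ▷ Y) ≫ lact = 𝟙 Y) :
    letI g₁ : (X ⊗ F.C) ⊗ Y ⟶ X ⊗ Y := ract ▷ Y
    letI g₂ : (X ⊗ F.C) ⊗ Y ⟶ X ⊗ Y := (α_ X F.C Y).hom ≫ (X ◁ lact)
    letI b : X ⊗ Y ⟶ X ⊗ Y :=
      (X ◁ (λ_ Y).inv) ≫ (X ◁ ((F.one ≫ F.comul) ▷ Y)) ≫ (X ◁ (α_ F.C F.C Y).hom) ≫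
        (α_ X F.C (F.C ⊗ Y)).inv ≫ (ract ⊗ₘ lact)
    (b ≫ b = b) ∧
    (g₁ ≫ b = g₂ ≫ b) ∧
    ∀ (W : V) (p : X ⊗ Y ⟶ W) (i : W ⟶ X ⊗ Y),
      p ≫ i = b → i ≫ p = 𝟙 W →
      ∀ (w : g₁ ≫ p = g₂ ≫ p), Nonempty (IsColimit (Cofork.ofπ p w)) :=
  tensor_over_C_as_splitting_of_idempotent_general F X ract hXassoc Y lact hYassoc hYunit
end

section
/- Let V be a braided monoidal category with braiding c, let A and C be comonoids in V, and let Y be an object equipped with a coassociative counital left A-coaction δ^A : Y ⟶ A ⊗ Y and with two morphisms δ¹, δ² : Y ⟶ C ⊗ Y each of which commutes with δ^A in the braided sense: (1_C ⊗ δ^A) ∘ δⁱ = (c_{A,C} ⊗ 1_Y) ∘ (1_A ⊗ δⁱ) ∘ δ^A for i = 1, 2 (associators suppressed). Suppose h : Y ⟶ Z is a C⊗-coequalizer of the pair (δ¹, δ²). Then there exists a unique morphism δ^A_Z : Z ⟶ A ⊗ Z such that δ^A_Z ∘ h = (1_A ⊗ h) ∘ δ^A; moreover δ^A_Z is itself a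 coassociative counital left A-coaction on Z. -/
open CategoryTheory MonoidalCategory CategoryTheory.Limits

/-- In a braided monoidal category, if `Y` carries a left `A`-coaction
`δA` for a comonoid `A` and two morphisms `δ¹ δ² : Y ⟶ C ⊗ Y` (with `C` a comonoid) each
commuting with `δA` in the braided sense, and `h : Y ⟶ Z` is a `C⊗`-coequalizer of
`(δ¹, δ²)`, then there is a unique morphism `δAZ : Z ⟶ A ⊗ Z` with
`δAZ ∘ h = (1_A ⊗ h) ∘ δA`, and this morphism is a coassociative counital left
`A`-coaction on `Z`. -/
theorem coaction_descends_along_Ctensor_coequalizer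
    {V : Type*} [Category V] [MonoidalCategory V] [BraidedCategory V]
    -- the comonoid A
    (A : V) (comulA : A ⟶ A ⊗ A) (counitA : A ⟶ 𝟙_ V)
    (hAcoassoc : comulA ≫ (A ◁ comulA) = comulA ≫ (comulA ▷ A) ≫ (α_ A A A).hom)
    (hAcounitl : comulA ≫ (counitA ▷ A) = (λ_ A).inv)
    (hAcounitr : comulA ≫ (A ◁ counitA) = (ρ_ A).inv)
    -- the comonoid C
    (C : V) (comulC : C ⟶ C ⊗ C) (counitC : C ⟶ 𝟙_ V)
    (hCcoassoc : comulC ≫ (C ◁ comulC) = comulC ≫ (comulC ▷ C) ≫ (α_ C C C).hom)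
    (hCcounitl : comulC ≫ (counitC ▷ C) = (λ_ C).inv)
    (hCcounitr : comulC ≫ (C ◁ counitC) = (ρ_ C).inv)
    -- the left A-coaction on Y
    (Y : V) (δA : Y ⟶ A ⊗ Y)
    (hcoassoc : δA ≫ (A ◁ δA) = δA ≫ (comulA ▷ Y) ≫ (α_ A A Y).hom)
    (hcounit : δA ≫ (counitA ▷ Y) = (λ_ Y).inv)
    -- the two morphisms δ¹, δ² commuting with δA in the braided sense
    (δ₁ δ₂ : Y ⟶ C ⊗ Y)
    (hcomm₁ : δ₁ ≫ (C ◁ δA) =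
      δA ≫ (A ◁ δ₁) ≫ (α_ A C Y).inv ≫ ((β_ A C).hom ▷ Y) ≫ (α_ C A Y).hom)
    (hcomm₂ : δ₂ ≫ (C ◁ δA) =
      δA ≫ (A ◁ δ₂) ≫ (α_ A C Y).inv ≫ ((β_ A C).hom ▷ Y) ≫ (α_ C A Y).hom)
    -- h is a C⊗-coequalizer of (δ₁, δ₂)
    (Z : V) (h : Y ⟶ Z)
    (hcoeq : δ₁ ≫ (C ◁ h) = δ₂ ≫ (C ◁ h))
    (huniv : ∀ (W : V) (k : Y ⟶ W), δ₁ ≫ (C ◁ k) = δ₂ ≫ (C ◁ k) →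
      ∃! z : Z ⟶ W, h ≫ z = k) :
    (∃! δAZ : Z ⟶ A ⊗ Z, h ≫ δAZ = δA ≫ (A ◁ h)) ∧
    (∀ δAZ : Z ⟶ A ⊗ Z, h ≫ δAZ = δA ≫ (A ◁ h) →
      δAZ ≫ (A ◁ δAZ) = δAZ ≫ (comulA ▷ Z) ≫ (α_ A A Z).hom ∧
      δAZ ≫ (counitA ▷ Z) = (λ_ Z).inv) := by

  -- `h` is epi with respect to the coequalizer property
  have hcancel : ∀ (W : V) (u v : Z ⟶ W), h ≫ u = h ≫ v → u = v := by
    intro W u v huv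
    have hk : δ₁ ≫ (C ◁ (h ≫ u)) = δ₂ ≫ (C ◁ (h ≫ u)) := by
      simp only [MonoidalCategory.whiskerLeft_comp, ← Category.assoc]
      rw [hcoeq]
    obtain ⟨z, _, hz⟩ := huniv W (h ≫ u) hk
    exact (hz u rfl).trans (hz v huv.symm).symm
  -- sliding `h` past the braiding gadget
  have hslide : (α_ A C Y).inv ≫ ((β_ A C).hom ▷ Y) ≫ (α_ C A Y).hom ≫ (C ◁ (A ◁ h)) =
      (A ◁ (C ◁ h)) ≫ (α_ A C Z).inv ≫ ((β_ A C).hom ▷ Z) ≫ (α_ C A Z).hom := by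
    rw [← MonoidalCategory.associator_naturality_right C A h, ← whisker_exchange_assoc,
      MonoidalCategory.associator_inv_naturality_right_assoc]
  -- the descended morphism exists
  have hk : δ₁ ≫ (C ◁ (δA ≫ (A ◁ h))) = δ₂ ≫ (C ◁ (δA ≫ (A ◁ h))) := by
    simp only [MonoidalCategory.whiskerLeft_comp, ← Category.assoc]
    rw [hcomm₁, hcomm₂]
    simp only [Category.assoc, hslide]
    simp only [← MonoidalCategory.whiskerLeft_comp, ← Category.assoc]
    rw [hcoeq]
  refine ⟨huniv (A ⊗ Z) (δA ≫ (A ◁ h)) hk, ?_⟩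
  intro δAZ hδAZ
  constructor
  · apply hcancel
    have lhs : h ≫ δAZ ≫ (A ◁ δAZ) =
        δA ≫ (comulA ▷ Y) ≫ (α_ A A Y).hom ≫ (A ◁ (A ◁ h)) := by
      rw [← Category.assoc, hδAZ, Category.assoc, ← MonoidalCategory.whiskerLeft_comp, hδAZ,
        MonoidalCategory.whiskerLeft_comp, ← Category.assoc, hcoassoc]
      simp [Category.assoc]
    rw [lhs, reassoc_of% hδAZ, whisker_exchange_assoc,
      MonoidalCategory.associator_naturality_right]
  · apply hcancel
    rw [reassoc_of% hδAZ, whisker_exchange, reassoc_of% hcounit,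
      ← MonoidalCategory.leftUnitor_inv_naturality]
end

section
/- Let 𝒞 be a category, let q : X₂ ⟶ X₃ be a coequalizer of a parallel pair f, g : X₁ ⟶ X₂, and let e₁ : X₁ ⟶ X₁, e₂ : X₂ ⟶ X₂, e₃ : X₃ ⟶ X₃ be idempotents compatible with the diagram: f ∘ e₁ = e₂ ∘ f, g ∘ e₁ = e₂ ∘ g, and q ∘ e₂ = e₃ ∘ q. Suppose each e_j splits, i.e. there are morphisms p_j : X_j ⟶ Z_j and i_j : Z_j ⟶ X_j with i_j ∘ p_j = e_j and p_j ∘ i_j = 1_{Z_j}. Then the morphism p₃ ∘ q ∘ i₂ : Z₂ ⟶ Z₃ is a coequalizer of the pair (p₂ ∘ f ∘ i₁, p₂ ∘ g ∘ i₁) : Z₁ ⟶ Z₂. -/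
open CategoryTheory CategoryTheory.Limits

/-- A coequalizer diagram equipped with compatible split idempotents
induces a coequalizer diagram on the splitting objects. -/
theorem coequalizer_of_split_idempotents
    {C : Type*} [Category C] {X₁ X₂ X₃ : C}
    (f g : X₁ ⟶ X₂) (q : X₂ ⟶ X₃)
    (hq : f ≫ q = g ≫ q) (hcolim : IsColimit (Cofork.ofπ q hq))
    (e₁ : X₁ ⟶ X₁) (e₂ : X₂ ⟶ X₂) (e₃ : X₃ ⟶ X₃)
    (he₁ : e₁ ≫ e₁ = e₁) (he₂ : e₂ ≫ e₂ = e₂) (he₃ : e₃ ≫ e₃ = e₃)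
    (hf : e₁ ≫ f = f ≫ e₂) (hg : e₁ ≫ g = g ≫ e₂) (hqe : e₂ ≫ q = q ≫ e₃)
    {Z₁ Z₂ Z₃ : C}
    (p₁ : X₁ ⟶ Z₁) (i₁ : Z₁ ⟶ X₁) (hsplit₁ : p₁ ≫ i₁ = e₁) (hretr₁ : i₁ ≫ p₁ = 𝟙 Z₁)
    (p₂ : X₂ ⟶ Z₂) (i₂ : Z₂ ⟶ X₂) (hsplit₂ : p₂ ≫ i₂ = e₂) (hretr₂ : i₂ ≫ p₂ = 𝟙 Z₂)
    (p₃ : X₃ ⟶ Z₃) (i₃ : Z₃ ⟶ X₃) (hsplit₃ : p₃ ≫ i₃ = e₃) (hretr₃ : i₃ ≫ p₃ = 𝟙 Z₃) :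
    ∀ (w : (i₁ ≫ f ≫ p₂) ≫ (i₂ ≫ q ≫ p₃) = (i₁ ≫ g ≫ p₂) ≫ (i₂ ≫ q ≫ p₃)),
      Nonempty (IsColimit (Cofork.ofπ (i₂ ≫ q ≫ p₃) w)) := by
  intro w
  have hep₂ : e₂ ≫ p₂ = p₂ := by rw [← hsplit₂, Category.assoc, hretr₂, Category.comp_id]
  have hep₃ : e₃ ≫ p₃ = p₃ := by rw [← hsplit₃, Category.assoc, hretr₃, Category.comp_id]
  have h1 : ∀ {W : C} (x : Z₂ ⟶ W), p₁ ≫ i₁ ≫ f ≫ p₂ ≫ x = f ≫ p₂ ≫ x := by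
    intro W x
    rw [← Category.assoc p₁ i₁, hsplit₁, ← Category.assoc e₁ f, hf, Category.assoc,
      ← Category.assoc e₂ p₂, hep₂]
  have h2 : ∀ {W : C} (x : Z₂ ⟶ W), p₁ ≫ i₁ ≫ g ≫ p₂ ≫ x = g ≫ p₂ ≫ x := by
    intro W x
    rw [← Category.assoc p₁ i₁, hsplit₁, ← Category.assoc e₁ g, hg, Category.assoc,
      ← Category.assoc e₂ p₂, hep₂]
  have cond : ∀ s : Cofork (i₁ ≫ f ≫ p₂) (i₁ ≫ g ≫ p₂),
      f ≫ p₂ ≫ s.π = g ≫ p₂ ≫ s.π := by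
    intro s
    have h := s.condition
    simp only [Category.assoc] at h
    rw [← h1 s.π, ← h2 s.π, h]
  refine ⟨Cofork.IsColimit.mk _
    (fun s => i₃ ≫ hcolim.desc (Cofork.ofπ (p₂ ≫ s.π) (cond s)))
    (fun s => ?_) (fun s m hm => ?_)⟩
  · have hfac : q ≫ hcolim.desc (Cofork.ofπ (p₂ ≫ s.π) (cond s)) = p₂ ≫ s.π :=
      hcolim.fac _ WalkingParallelPair.one
    set d := hcolim.desc (Cofork.ofπ (p₂ ≫ s.π) (cond s)) with hd
    show (i₂ ≫ q ≫ p₃) ≫ i₃ ≫ d = s.π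
    simp only [Category.assoc]
    rw [← Category.assoc p₃ i₃ d, hsplit₃, ← Category.assoc q e₃ d, ← hqe,
      Category.assoc, hfac, ← Category.assoc e₂ p₂, hep₂,
      ← Category.assoc i₂ p₂, hretr₂, Category.id_comp]
  · have hfac : q ≫ hcolim.desc (Cofork.ofπ (p₂ ≫ s.π) (cond s)) = p₂ ≫ s.π :=
      hcolim.fac _ WalkingParallelPair.one
    set d := hcolim.desc (Cofork.ofπ (p₂ ≫ s.π) (cond s)) with hd
    have hm' : i₂ ≫ q ≫ p₃ ≫ m = s.π := by simpa using hm
    have h3 : q ≫ p₃ ≫ m = p₂ ≫ s.π := by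
      have := congrArg (fun x => p₂ ≫ x) hm'
      rw [← Category.assoc p₂ i₂, hsplit₂, ← Category.assoc e₂ q, hqe,
        Category.assoc, ← Category.assoc e₃ p₃, hep₃] at this
      exact this
    have key : p₃ ≫ m = d := by
      refine Cofork.IsColimit.hom_ext hcolim ?_
      show q ≫ p₃ ≫ m = q ≫ d
      rw [h3, hfac]
    show m = i₃ ≫ d
    rw [← key, ← Category.assoc i₃ p₃ m, hretr₃, Category.id_comp]
end
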